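/- arXiv:1311.0768 — 5 statements merged into one kernel-verified Lean document; each statement's English description precedes it below -/
import Mathlib

section
/- Let V₁ and V₂ be finite sets of p×p real matrices. Then the convex hull of the product set { M₁M₂ : M₁ ∈ convexHull(V₁), M₂ ∈ convexHull(V₂) } is equal to the convex hull of the finite set V₁⊗V₂ of pairwise products { AB : A ∈ V₁, B ∈ V₂ }. (In other words, for bounded matrix polytopes given by their vertex sets, the convex hull of V₁⊗V₂ is the smallest convex set containing the exact product set.) -/
/-- For bounded matrix polytopes given by finite vertex sets `V₁`, `V₂`, the convex hull
of the exact product set equals the convex hull of the pairwise products `V₁⊗V₂`. -/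
theorem stmt_1 {p : ℕ} (V₁ V₂ : Set (Matrix (Fin p) (Fin p) ℝ))
    (h₁ : V₁.Finite) (h₂ : V₂.Finite) :
    convexHull ℝ
        {M | ∃ M₁ ∈ convexHull ℝ V₁, ∃ M₂ ∈ convexHull ℝ V₂, M = M₁ * M₂}
      = convexHull ℝ (Set.image2 (· * ·) V₁ V₂) := by
  apply le_antisymm
  · refine convexHull_min ?_ (convex_convexHull ℝ _)
    rintro M ⟨M₁, hM₁, M₂, hM₂, rfl⟩
    have key : ∀ A ∈ V₁, A * M₂ ∈ convexHull ℝ (Set.image2 (· * ·) V₁ V₂) := by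
      intro A hA
      have : A * M₂ ∈ (LinearMap.mulLeft ℝ A) '' (convexHull ℝ V₂) :=
        ⟨M₂, hM₂, rfl⟩
      rw [LinearMap.image_convexHull] at this
      refine convexHull_mono ?_ this
      rintro _ ⟨B, hB, rfl⟩
      exact Set.mem_image2_of_mem hA hB
    have h : M₁ * M₂ ∈ (LinearMap.mulRight ℝ M₂) '' (convexHull ℝ V₁) :=
      ⟨M₁, hM₁, rfl⟩
    rw [LinearMap.image_convexHull] at h
    refine convexHull_min ?_ (convex_convexHull ℝ _) h
    rintro _ ⟨A, hA, rfl⟩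
    exact key A hA
  · apply convexHull_mono
    rintro _ ⟨A, hA, B, hB, rfl⟩
    exact ⟨A, subset_convexHull ℝ _ hA, B, subset_convexHull ℝ _ hB, rfl⟩
end

section
/- Let A be a p×p real matrix, G a q×p real matrix, g = { x ∈ ℝ^p : (G·x)ᵢ ≤ 0 for all i } the guard set, and τ the guarded semantic function defined by τ(Y) = { A·x : x ∈ Y ∩ g }. Let 𝓜 be any set of p×p real matrices such that Aⁿ ∈ 𝓜 for every n ≥ 0. Then for every set X ⊆ ℝ^p, ⋃_{n ≥ 0} τⁿ(X) ⊆ X ∪ τ( { M·x : M ∈ 𝓜, x ∈ X ∩ g } ). -/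
/-- If `𝓜` contains every power `Aⁿ`, then the reachable set of the guarded loop is
contained in `X ∪ τ({M·x : M ∈ 𝓜, x ∈ X ∩ g})`. -/
theorem stmt_4 {p q : ℕ} (A : Matrix (Fin p) (Fin p) ℝ) (G : Matrix (Fin q) (Fin p) ℝ)
    (g : Set (Fin p → ℝ)) (hg : g = {x | ∀ i, G.mulVec x i ≤ 0})
    (τ : Set (Fin p → ℝ) → Set (Fin p → ℝ))
    (hτ : ∀ Y, τ Y = (fun x => A.mulVec x) '' (Y ∩ g))
    (𝓜 : Set (Matrix (Fin p) (Fin p) ℝ)) (h𝓜 : ∀ n : ℕ, A ^ n ∈ 𝓜)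
    (X : Set (Fin p → ℝ)) :
    (⋃ n : ℕ, τ^[n] X) ⊆
      X ∪ τ {y | ∃ M ∈ 𝓜, ∃ x ∈ X ∩ g, y = M.mulVec x} := by
  -- auxiliary lemma: every iterate is contained in X ∪ {A^k x : x ∈ X ∩ g}
  have key : ∀ n : ℕ, τ^[n] X ⊆ X ∪ {y | ∃ k : ℕ, ∃ x ∈ X ∩ g, y = (A ^ k).mulVec x} := by
    intro n
    induction n with
    | zero => intro y hy; exact Or.inl hy
    | succ n ih =>
      intro y hy
      rw [Function.iterate_succ_apply', hτ] at hy
      obtain ⟨z, ⟨hz1, hz2⟩, rfl⟩ := hy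
      rcases ih hz1 with hz | ⟨k, x, hx, rfl⟩
      · exact Or.inr ⟨1, z, ⟨hz, hz2⟩, by simp [Matrix.mulVec_mulVec, pow_one]⟩
      · refine Or.inr ⟨k + 1, x, hx, ?_⟩
        simp [pow_succ', Matrix.mulVec_mulVec]
  intro y hy
  obtain ⟨_, ⟨n, rfl⟩, hy⟩ := hy
  cases n with
  | zero => exact Or.inl hy
  | succ n =>
    simp only [Function.iterate_succ_apply', hτ] at hy
    obtain ⟨z, ⟨hz1, hz2⟩, rfl⟩ := hy
    refine Or.inr ?_
    rw [hτ]
    refine ⟨z, ⟨?_, hz2⟩, rfl⟩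
    rcases key n hz1 with hz | ⟨k, x, hx, rfl⟩
    · exact ⟨A ^ 0, h𝓜 0, z, ⟨hz, hz2⟩, by simp⟩
    · exact ⟨A ^ k, h𝓜 k, x, hx, rfl⟩
end

section
/- Let J be a p×p real matrix, G a q×p real matrix, g = { x ∈ ℝ^p : (G·x)ᵢ ≤ 0 for all i } the guard set, and τ the guarded semantic function defined by τ(Y) = { J·x : x ∈ Y ∩ g }. Let X ⊆ ℝ^p and suppose N ∈ ℕ is such that for every x ∈ X ∩ g there exists a row index i with (G·(J^N·x))ᵢ > 0 (i.e. the image J^N(X ∩ g) is disjoint from g). Then ⋃_{n ≥ 0} τⁿ(X) = ⋃_{0 ≤ n ≤ N} τⁿ(X). -/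
/-- If `J^N(X ∩ g)` is disjoint from the guard `g`, then the reachable set of the
guarded loop equals the union of the first `N` iterates. -/
theorem stmt_5 {p q : ℕ} (J : Matrix (Fin p) (Fin p) ℝ) (G : Matrix (Fin q) (Fin p) ℝ)
    (g : Set (Fin p → ℝ)) (hg : g = {x | ∀ i, G.mulVec x i ≤ 0})
    (τ : Set (Fin p → ℝ) → Set (Fin p → ℝ))
    (hτ : ∀ Y, τ Y = (fun x => J.mulVec x) '' (Y ∩ g))
    (X : Set (Fin p → ℝ)) (N : ℕ)
    (hN : ∀ x ∈ X ∩ g, ∃ i, 0 < G.mulVec ((J ^ N).mulVec x) i) :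
    (⋃ n : ℕ, τ^[n] X) = ⋃ n ≤ N, τ^[n] X := by
  -- every point of τ^[n] X ∩ g is J^n of a point of X ∩ g
  have key : ∀ n : ℕ, ∀ y ∈ τ^[n] X ∩ g, ∃ x ∈ X ∩ g, y = (J ^ n).mulVec x := by
    intro n
    induction n with
    | zero =>
      intro y hy
      exact ⟨y, hy, by simp [Matrix.one_mulVec]⟩
    | succ n ih =>
      intro y hy
      rw [Function.iterate_succ_apply', hτ] at hy
      obtain ⟨z, hz, rfl⟩ := hy.1
      obtain ⟨x, hx, rfl⟩ := ih z hz
      refine ⟨x, hx, ?_⟩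
      simp [pow_succ', Matrix.mulVec_mulVec]
  have hdisj : τ^[N] X ∩ g = ∅ := by
    ext y
    simp only [Set.mem_empty_iff_false, iff_false]
    intro hy
    obtain ⟨x, hx, rfl⟩ := key N y hy
    obtain ⟨i, hi⟩ := hN x hx
    have := hy.2
    rw [hg] at this
    exact absurd (this i) (not_le.mpr hi)
  have hempty : ∀ n, N < n → τ^[n] X = ∅ := by
    intro n hn
    induction n with
    | zero => omega
    | succ n ih =>
      rw [Function.iterate_succ_apply', hτ]
      rcases Nat.lt_or_ge N n with h | h
      · rw [ih h, Set.empty_inter, Set.image_empty]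
      · have : N = n := by omega
        subst this
        rw [hdisj, Set.image_empty]
  apply Set.Subset.antisymm
  · intro y hy
    rw [Set.mem_iUnion] at hy
    obtain ⟨n, hyn⟩ := hy
    by_cases h : n ≤ N
    · exact Set.mem_biUnion h hyn
    · rw [hempty n (by omega)] at hyn
      exact absurd hyn (Set.notMem_empty y)
  · intro y hy
    rw [Set.mem_iUnion₂] at hy
    obtain ⟨n, _, hyn⟩ := hy
    exact Set.mem_iUnion.mpr ⟨n, hyn⟩
end

section
/- Let γ₁ ≥ γ₂ be reals with ¬(γ₁ = 0 ∧ γ₂ < 0), let k₁, k₂ ∈ ℕ with kᵢ ≥ 1 whenever γᵢ = 0, and let N, t ∈ ℝ satisfy t ≥ N, N ≥ max(k₁+1, 2k₂+1), and N ≥ kᵢ + ⌈kᵢ/|γᵢ|⌉ for each i with γᵢ ≠ 0 and kᵢ ≥ 1. Define the ratio ρ(t) = |γ₁ + Σ_{l=0}^{k₁−1} 1/(t−l)| / |γ₂ + Σ_{l=0}^{k₂−1} 1/(t−l)| and L = γ₁/(γ₂ + k₂/(N−k₂+1)) if γ₁ ≥ γ₂ ≥ 0 and γ₁ > 0; L =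 k₁/(2k₂) if γ₁ = γ₂ = 0; L = (|γ₁| − k₁/(N−k₁+1))/|γ₂| if 0 > γ₁ ≥ γ₂; and L = γ₁/|γ₂| if γ₁ > 0 > γ₂. Then the denominator of ρ(t) is nonzero and ρ(t) ≥ L. -/
lemma aux_nonneg (k : ℕ) (t : ℝ) (ht : (k:ℝ) ≤ t) :
    0 ≤ ∑ l ∈ Finset.range k, 1 / (t - l) := by
  apply Finset.sum_nonneg
  intro l hl
  have hl' : (l:ℝ) + 1 ≤ (k:ℝ) := by exact_mod_cast Finset.mem_range.mp hl
  have : 0 < t - l := by linarith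
  positivity

lemma aux_pos (k : ℕ) (hk : 1 ≤ k) (t : ℝ) (ht : (k:ℝ) ≤ t) :
    0 < ∑ l ∈ Finset.range k, 1 / (t - l) := by
  apply Finset.sum_pos
  · intro l hl
    have hl' : (l:ℝ) + 1 ≤ (k:ℝ) := by exact_mod_cast Finset.mem_range.mp hl
    have : 0 < t - l := by linarith
    positivity
  · exact Finset.nonempty_range_iff.mpr (by omega)

lemma aux_le (k : ℕ) (t : ℝ) (ht : (k:ℝ) ≤ t) :
    ∑ l ∈ Finset.range k, 1 / (t - l) ≤ (k:ℝ) / (t - k + 1) := by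
  have h0 : 0 < t - k + 1 := by linarith
  calc ∑ l ∈ Finset.range k, 1 / (t - l)
      ≤ ∑ l ∈ Finset.range k, 1 / (t - k + 1) := by
        apply Finset.sum_le_sum
        intro l hl
        have hl' : (l:ℝ) + 1 ≤ (k:ℝ) := by exact_mod_cast Finset.mem_range.mp hl
        apply one_div_le_one_div_of_le h0 (by linarith)
    _ = (k:ℝ) / (t - k + 1) := by
        rw [Finset.sum_const, Finset.card_range, nsmul_eq_mul, mul_one_div]

lemma aux_ge (k : ℕ) (t : ℝ) (ht : (k:ℝ) ≤ t) :
    (k:ℝ) / t ≤ ∑ l ∈ Finset.range k, 1 / (t - l) := by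
  calc (k:ℝ) / t = ∑ l ∈ Finset.range k, 1 / t := by
        rw [Finset.sum_const, Finset.card_range, nsmul_eq_mul, mul_one_div]
    _ ≤ ∑ l ∈ Finset.range k, 1 / (t - l) := by
        apply Finset.sum_le_sum
        intro l hl
        have hl' : (l:ℝ) + 1 ≤ (k:ℝ) := by exact_mod_cast Finset.mem_range.mp hl
        have hl0 : (0:ℝ) ≤ l := l.cast_nonneg
        apply one_div_le_one_div_of_le (by linarith) (by linarith)

lemma aux_le_N (k : ℕ) (N t : ℝ) (hN : (k:ℝ) + 1 ≤ N) (ht : N ≤ t) :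
    ∑ l ∈ Finset.range k, 1 / (t - l) ≤ (k:ℝ) / (N - k + 1) := by
  calc ∑ l ∈ Finset.range k, 1 / (t - l) ≤ (k:ℝ) / (t - k + 1) :=
        aux_le k t (by linarith)
    _ ≤ (k:ℝ) / (N - k + 1) := by
        apply div_le_div_of_nonneg_left k.cast_nonneg (by linarith) (by linarith)

lemma aux_lt (γ : ℝ) (hγ : γ ≠ 0) (k : ℕ) (N t : ℝ)
    (hNk : 1 ≤ k → (k:ℝ) + (⌈(k:ℝ)/|γ|⌉ : ℝ) ≤ N) (hN : (k:ℝ) + 1 ≤ N) (ht : N ≤ t) :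
    ∑ l ∈ Finset.range k, 1 / (t - l) < |γ| := by
  have hγ0 : 0 < |γ| := abs_pos.mpr hγ
  rcases Nat.eq_zero_or_pos k with hk | hk
  · simp [hk, hγ0]
  · have hceil : (k:ℝ)/|γ| ≤ (⌈(k:ℝ)/|γ|⌉ : ℝ) := Int.le_ceil _
    have hNk' := hNk hk
    have hle := aux_le k t (by linarith)
    have h0 : 0 < t - k + 1 := by linarith
    have hkey : (k:ℝ) / (t - k + 1) < |γ| := by
      rw [div_lt_iff₀ h0]
      have hfs : |γ| * ((k:ℝ)/|γ|) = k := by field_simp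
      nlinarith
    linarith

/-- Lower bound `L` on the ratio
`|γ₁ + Σ_{l<k₁} 1/(t−l)| / |γ₂ + Σ_{l<k₂} 1/(t−l)|` for `t ≥ N`, in the four cases of
the sign pattern of `(γ₁, γ₂)` with `γ₁ ≥ γ₂` and `¬(γ₁ = 0 ∧ γ₂ < 0)`. -/
theorem stmt_14 (γ₁ γ₂ : ℝ) (hγ : γ₂ ≤ γ₁) (hnot : ¬(γ₁ = 0 ∧ γ₂ < 0))
    (k₁ k₂ : ℕ) (hk₁ : γ₁ = 0 → 1 ≤ k₁) (hk₂ : γ₂ = 0 → 1 ≤ k₂)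
    (N t : ℝ) (htN : N ≤ t)
    (hN : max ((k₁ : ℝ) + 1) (2 * (k₂ : ℝ) + 1) ≤ N)
    (hN₁ : γ₁ ≠ 0 → 1 ≤ k₁ → (k₁ : ℝ) + (⌈(k₁ : ℝ) / |γ₁|⌉ : ℝ) ≤ N)
    (hN₂ : γ₂ ≠ 0 → 1 ≤ k₂ → (k₂ : ℝ) + (⌈(k₂ : ℝ) / |γ₂|⌉ : ℝ) ≤ N)
    (L : ℝ)
    (hL : L = if 0 < γ₁ ∧ 0 ≤ γ₂ then γ₁ / (γ₂ + (k₂ : ℝ) / (N - k₂ + 1))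
          else if γ₁ = 0 ∧ γ₂ = 0 then (k₁ : ℝ) / (2 * k₂)
          else if γ₁ < 0 then (|γ₁| - (k₁ : ℝ) / (N - k₁ + 1)) / |γ₂|
          else γ₁ / |γ₂|) :
    |γ₂ + ∑ l ∈ Finset.range k₂, 1 / (t - l)| ≠ 0 ∧
      L ≤ |γ₁ + ∑ l ∈ Finset.range k₁, 1 / (t - l)| /
            |γ₂ + ∑ l ∈ Finset.range k₂, 1 / (t - l)| := by
  set S₁ := ∑ l ∈ Finset.range k₁, 1 / (t - l) with hS₁def
  set S₂ := ∑ l ∈ Finset.range k₂, 1 / (t - l) with hS₂def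
  have hN1 : (k₁:ℝ) + 1 ≤ N := le_trans (le_max_left _ _) hN
  have hN2 : 2 * (k₂:ℝ) + 1 ≤ N := le_trans (le_max_right _ _) hN
  have hN2' : (k₂:ℝ) + 1 ≤ N := by
    have : (0:ℝ) ≤ k₂ := k₂.cast_nonneg
    linarith
  have hS₁nn : 0 ≤ S₁ := aux_nonneg k₁ t (by linarith)
  have hS₂nn : 0 ≤ S₂ := aux_nonneg k₂ t (by linarith)
  have hS₁le : S₁ ≤ (k₁:ℝ) / (N - k₁ + 1) := aux_le_N k₁ N t hN1 htN
  have hS₂le : S₂ ≤ (k₂:ℝ) / (N - k₂ + 1) := aux_le_N k₂ N t hN2' htN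
  by_cases h1 : 0 < γ₁ ∧ 0 ≤ γ₂
  · -- Case A: γ₁ > 0, γ₂ ≥ 0
    obtain ⟨hγ₁, hγ₂⟩ := h1
    have hden : 0 < γ₂ + S₂ := by
      rcases eq_or_lt_of_le hγ₂ with h | h
      · have hpos : 0 < S₂ := aux_pos k₂ (hk₂ h.symm) t (by linarith)
        linarith
      · linarith
    have hnum : 0 < γ₁ + S₁ := by linarith
    have hB : 0 < (k₂:ℝ) / (N - k₂ + 1) ∨ (k₂:ℝ) / (N - k₂ + 1) = 0 := by
      rcases Nat.eq_zero_or_pos k₂ with h | h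
      · right; simp [h]
      · left
        apply div_pos (by exact_mod_cast h) (by linarith)
    have hdenB : 0 < γ₂ + (k₂:ℝ) / (N - k₂ + 1) := by
      rcases hB with h | h
      · linarith
      · rw [h]
        rcases eq_or_lt_of_le hγ₂ with h2 | h2
        · exfalso
          have hk := hk₂ h2.symm
          have : (0:ℝ) < k₂ := by exact_mod_cast hk
          have : 0 < (k₂:ℝ) / (N - k₂ + 1) := div_pos this (by linarith)
          linarith
        · linarith
    rw [abs_of_pos hnum, abs_of_pos hden]
    refine ⟨by positivity, ?_⟩
    simp only [hL, if_pos (⟨hγ₁, hγ₂⟩ : 0 < γ₁ ∧ 0 ≤ γ₂)]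
    refine div_le_div₀ hnum.le (by linarith) hden (by linarith)
  · by_cases h2 : γ₁ = 0 ∧ γ₂ = 0
    · -- Case B: both zero
      obtain ⟨hγ₁, hγ₂⟩ := h2
      have hk1 := hk₁ hγ₁
      have hk2 := hk₂ hγ₂
      have ht0 : 0 < t := by
        have : (0:ℝ) ≤ k₂ := k₂.cast_nonneg
        linarith
      have hS₁ge : (k₁:ℝ) / t ≤ S₁ := aux_ge k₁ t (by linarith)
      have hS₂pos : 0 < S₂ := aux_pos k₂ (hk₂ hγ₂) t (by linarith)
      have hS₂le' : S₂ ≤ (k₂:ℝ) / (t - k₂ + 1) := aux_le k₂ t (by linarith)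
      have hnum : 0 < S₁ := aux_pos k₁ hk1 t (by linarith)
      rw [hγ₁, hγ₂, zero_add, zero_add, abs_of_pos hnum, abs_of_pos hS₂pos]
      refine ⟨by positivity, ?_⟩
      have hif : ¬(0 < γ₁ ∧ 0 ≤ γ₂) := by rw [hγ₁, hγ₂]; simp
      simp only [hL, if_neg hif, if_pos (⟨hγ₁, hγ₂⟩ : γ₁ = 0 ∧ γ₂ = 0)]
      rw [div_le_div_iff₀ (by positivity) hS₂pos]
      have hk1' : (0:ℝ) ≤ k₁ := k₁.cast_nonneg
      have hk2' : (1:ℝ) ≤ k₂ := by exact_mod_cast hk2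
      have e1 : S₂ * (t - k₂ + 1) ≤ k₂ := by
        rw [← le_div_iff₀ (by linarith)]; exact hS₂le'
      have e2 : (k₁:ℝ) ≤ S₁ * t := by
        rw [← div_le_iff₀ ht0]; exact hS₁ge
      -- goal : k₁ * S₂ ≤ S₁ * (2 * k₂)
      nlinarith [mul_le_mul_of_nonneg_left e1 hk1', mul_le_mul_of_nonneg_right e2 (by linarith : (0:ℝ) ≤ (k₂:ℝ)),
        mul_nonneg hS₁nn (by linarith : (0:ℝ) ≤ (k₂:ℝ)), mul_nonneg (mul_nonneg hS₁nn (by linarith : (0:ℝ) ≤ (k₂:ℝ))) (by linarith : (0:ℝ) ≤ t - 2*k₂ + 2),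
        mul_pos ht0 (by linarith : (0:ℝ) < t - k₂ + 1)]
    · by_cases h3 : γ₁ < 0
      · -- Case C: γ₂ ≤ γ₁ < 0
        have hγ₁ne : γ₁ ≠ 0 := ne_of_lt h3
        have hγ₂lt : γ₂ < 0 := lt_of_le_of_lt hγ h3
        have hγ₂ne : γ₂ ≠ 0 := ne_of_lt hγ₂lt
        have hlt1 : S₁ < |γ₁| := aux_lt γ₁ hγ₁ne k₁ N t (hN₁ hγ₁ne) hN1 htN
        have hlt2 : S₂ < |γ₂| := aux_lt γ₂ hγ₂ne k₂ N t (hN₂ hγ₂ne) hN2' htN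
        rw [abs_of_neg h3] at hlt1
        rw [abs_of_neg hγ₂lt] at hlt2
        have hnum : γ₁ + S₁ < 0 := by linarith
        have hden : γ₂ + S₂ < 0 := by linarith
        rw [abs_of_neg hnum, abs_of_neg hden]
        refine ⟨ne_of_gt (by linarith), ?_⟩
        simp only [hL, if_neg h1, if_neg h2, if_pos h3]
        rw [abs_of_neg h3, abs_of_neg hγ₂lt]
        refine div_le_div₀ (by linarith) (by linarith) (by linarith) (by linarith)
      · -- Case D: γ₁ > 0 > γ₂
        have hγ₁pos : 0 < γ₁ := by
          rcases lt_trichotomy γ₁ 0 with h | h | h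
          · exact absurd h h3
          · exfalso
            rcases lt_trichotomy γ₂ 0 with h' | h' | h'
            · exact hnot ⟨h, h'⟩
            · exact h2 ⟨h, h'⟩
            · exact h1 ⟨by linarith [lt_of_lt_of_le h' hγ], le_of_lt h'⟩
          · exact h
        have hγ₂lt : γ₂ < 0 := by
          rcases lt_trichotomy γ₂ 0 with h | h | h
          · exact h
          · exact absurd ⟨hγ₁pos, le_of_eq h.symm⟩ h1
          · exact absurd ⟨hγ₁pos, le_of_lt h⟩ h1
        have hγ₂ne : γ₂ ≠ 0 := ne_of_lt hγ₂lt
        have hlt2 : S₂ < |γ₂| := aux_lt γ₂ hγ₂ne k₂ N t (hN₂ hγ₂ne) hN2' htN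
        rw [abs_of_neg hγ₂lt] at hlt2
        have hnum : 0 < γ₁ + S₁ := by linarith
        have hden : γ₂ + S₂ < 0 := by linarith
        rw [abs_of_pos hnum, abs_of_neg hden]
        refine ⟨ne_of_gt (by linarith), ?_⟩
        simp only [hL, if_neg h1, if_neg h2, if_neg h3]
        rw [abs_of_neg hγ₂lt]
        refine div_le_div₀ hnum.le (by linarith) (by linarith) (by linarith)
end

section
/- Let γ₁, γ₂ ∈ ℝ and k₁, k₂ ∈ ℕ with (γ₁,k₁) ≻ (γ₂,k₂) in the lexicographic order (i.e. γ₁ > γ₂, or γ₁ = γ₂ and k₁ > k₂), with (γ₁,k₁) ≠ (0,0) and (γ₂,k₂) ≠ (0,0). Let μ₁ > 0, μ₂ > 0 and s ∈ {−1, 1}, and define φ(t) = μ₁·φ_{γ₁,k₁}(t) + s·μ₂·φ_{γ₂,k₂}(t), where φ_{γ,k}(t) = (1/k!)·(∏_{l=0}^{k−1}(t−l))·e^{γ(t−k)}. Then there exists N ∈ ℝ such that for all t ≥ N: if γ₁ ≥ 0 then φ'(t) > 0, and if γ₁ < 0 then φ'(t) < 0. -/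
/-!
Write `φ(t) = c₁ P₁(t) e^{γ₁ t} + c₂ P₂(t) e^{γ₂ t}`, where `P_k(t) = t(t-1)⋯(t-k+1)` is the
monic falling factorial. Then `φ'(t) = c₁ Q₁(t) e^{γ₁ t} + c₂ Q₂(t) e^{γ₂ t}` with `Q = P' + γ P`.
The lexicographic order makes the second term negligible against the first (an exponential gap,
or equal exponents and `deg Q₂ < deg Q₁`), so `φ'` eventually has the sign of the leading
coefficient of `Q₁`: this is `γ₁` if `γ₁ ≠ 0`, and `k₁ > 0` if `γ₁ = 0`.
-/

open Polynomial Real Filter Asymptotics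

lemma Asymptotics.IsEquivalent.eventually_sign_eq {α : Type*} {l : Filter α} {u v : α → ℝ}
    (h : u ~[l] v) : ∀ᶠ x in l, SignType.sign (u x) = SignType.sign (v x) := by
  filter_upwards [h.isLittleO.def (one_half_pos : (0 : ℝ) < 1 / 2)] with x hx
  rw [Real.norm_eq_abs, Real.norm_eq_abs, Pi.sub_apply, abs_le] at hx
  rcases lt_trichotomy (v x) 0 with hv | hv | hv
  · rw [sign_neg hv, sign_neg (by linarith [abs_of_neg hv])]
  · rw [hv, abs_zero, mul_zero, neg_zero] at hx
    rw [hv, le_antisymm (by linarith [hx.2]) (by linarith [hx.1] : 0 ≤ u x)]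
  · rw [sign_pos hv, sign_pos (by linarith [abs_of_pos hv])]

lemma Polynomial.eventually_sign_eval_eq_sign_leadingCoeff (p : ℝ[X]) :
    ∀ᶠ x in atTop, SignType.sign (p.eval x) = SignType.sign p.leadingCoeff := by
  filter_upwards [p.isEquivalent_atTop_lead.eventually_sign_eq, eventually_gt_atTop 0]
    with x hx hx0
  rw [hx, sign_mul, sign_pow, sign_pos hx0, one_pow, mul_one]

namespace Polynomial

/-- The polynomial part of the derivative of `t ↦ p(t) e^{γ t}`. -/
noncomputable def twistedDerivative {R : Type*} [CommRing R] (γ : R) (p : R[X]) : R[X] :=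
  derivative p + C γ * p

section
variable {R : Type*} [CommRing R] {γ : R} {p q : R[X]}

@[simp]
lemma twistedDerivative_zero_left (p : R[X]) : twistedDerivative 0 p = derivative p := by
  simp [twistedDerivative]

lemma eval_twistedDerivative (γ : R) (p : R[X]) (x : R) :
    (twistedDerivative γ p).eval x = (derivative p).eval x + γ * p.eval x := by
  simp [twistedDerivative]

lemma degree_twistedDerivative_le (γ : R) (p : R[X]) :
    (twistedDerivative γ p).degree ≤ p.degree :=
  (degree_add_le _ _).trans <| max_le degree_derivative_le <| by
    rw [← smul_eq_C_mul]; exact degree_smul_le γ p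

variable [IsDomain R]

lemma degree_derivative_lt_degree_C_mul (hγ : γ ≠ 0) (hp : p ≠ 0) :
    (derivative p).degree < (C γ * p).degree := by
  rw [degree_C_mul hγ]
  exact degree_derivative_lt hp

lemma degree_twistedDerivative_of_ne_zero (hγ : γ ≠ 0) (hp : p ≠ 0) :
    (twistedDerivative γ p).degree = p.degree := by
  rw [twistedDerivative,
    degree_add_eq_right_of_degree_lt (degree_derivative_lt_degree_C_mul hγ hp), degree_C_mul hγ]

lemma leadingCoeff_twistedDerivative_of_ne_zero (hγ : γ ≠ 0) (hp : p.Monic) :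
    (twistedDerivative γ p).leadingCoeff = γ := by
  rw [twistedDerivative,
    leadingCoeff_add_of_degree_lt (degree_derivative_lt_degree_C_mul hγ hp.ne_zero),
    leadingCoeff_mul, leadingCoeff_C, hp.leadingCoeff, mul_one]

lemma degree_twistedDerivative_lt [CharZero R] (γ : R) (h : p.natDegree < q.natDegree) :
    (twistedDerivative γ p).degree < (twistedDerivative γ q).degree := by
  rcases eq_or_ne γ 0 with rfl | hγ
  · simp only [twistedDerivative_zero_left]
    rcases eq_or_ne p.natDegree 0 with hp | hp
    · rw [derivative_eq_zero.2 hp, degree_zero, bot_lt_iff_ne_bot, Ne, degree_eq_bot,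
        derivative_eq_zero]
      omega
    · exact degree_lt_degree (by rw [natDegree_derivative, natDegree_derivative]; omega)
  · rw [degree_twistedDerivative_of_ne_zero hγ (ne_zero_of_natDegree_gt h)]
    exact (degree_twistedDerivative_le γ p).trans_lt (degree_lt_degree h)

end

lemma sign_leadingCoeff_twistedDerivative {R : Type*} [Field R] [LinearOrder R]
    [IsStrictOrderedRing R] {γ : R} {p : R[X]} (hp : p.Monic) (h : ¬(γ = 0 ∧ p.natDegree = 0)) :
    SignType.sign (twistedDerivative γ p).leadingCoeff = if 0 ≤ γ then 1 else -1 := by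
  rcases eq_or_ne γ 0 with rfl | hγ
  · have : p.natDegree ≠ 0 := fun h0 ↦ h ⟨rfl, h0⟩
    rw [twistedDerivative_zero_left, leadingCoeff_derivative, hp.leadingCoeff, one_mul,
      if_pos le_rfl, sign_pos (by positivity)]
  · rw [leadingCoeff_twistedDerivative_of_ne_zero hγ hp]
    split_ifs with h0
    · exact sign_pos (lt_of_le_of_ne h0 hγ.symm)
    · exact sign_neg (not_le.1 h0)

end Polynomial

lemma hasDerivAt_eval_mul_exp (p : ℝ[X]) (γ t : ℝ) :
    HasDerivAt (fun x ↦ p.eval x * exp (γ * x))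
      ((twistedDerivative γ p).eval t * exp (γ * t)) t := by
  refine ((p.hasDerivAt t).mul ((hasDerivAt_id' t).const_mul γ).exp).congr_deriv ?_
  rw [eval_twistedDerivative]
  ring

lemma isLittleO_eval_mul_exp_of_lt {p q : ℝ[X]} {γ₁ γ₂ : ℝ} (hq : q ≠ 0) (hγ : γ₂ < γ₁) :
    (fun t ↦ p.eval t * exp (γ₂ * t)) =o[atTop] fun t ↦ q.eval t * exp (γ₁ * t) := by
  have hp : p.eval =O[atTop] fun t ↦ t ^ p.natDegree := by
    simpa using isBigO_atTop_of_degree_le p (X ^ p.natDegree) (by simp [degree_le_natDegree])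
  have hone : (fun _ ↦ (1 : ℝ)) =O[atTop] q.eval := by
    simpa using isBigO_atTop_of_degree_le 1 q (by simpa using zero_le_degree_iff.2 hq)
  have hexp : (fun t ↦ p.eval t * exp (γ₂ * t)) =o[atTop] fun t ↦ exp (γ₁ * t) := by
    refine ((hp.trans_isLittleO (isLittleO_pow_exp_pos_mul_atTop _ (sub_pos.2 hγ))).mul_isBigO
      (isBigO_refl (fun t ↦ exp (γ₂ * t)) atTop)).congr_right fun t ↦ ?_
    rw [← exp_add]
    ring_nf
  refine hexp.trans_isBigO ((hone.mul (isBigO_refl (fun t ↦ exp (γ₁ * t)) atTop)).congr_left ?_)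
  simp

lemma isLittleO_eval_mul_exp_of_degree_lt {p q : ℝ[X]} (γ : ℝ) (h : p.degree < q.degree) :
    (fun t ↦ p.eval t * exp (γ * t)) =o[atTop] fun t ↦ q.eval t * exp (γ * t) :=
  (isLittleO_atTop_of_degree_lt p q h).mul_isBigO (isBigO_refl _ _)

lemma eventually_sign_add_eval_mul_exp {p q : ℝ[X]} {γ₁ γ₂ c₁ : ℝ} (c₂ : ℝ) (hc₁ : 0 < c₁)
    (hq : q ≠ 0) (hlex : γ₂ < γ₁ ∨ γ₁ = γ₂ ∧ p.degree < q.degree) :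
    ∀ᶠ t in atTop, SignType.sign (c₁ * (q.eval t * exp (γ₁ * t)) + c₂ * (p.eval t * exp (γ₂ * t)))
      = SignType.sign q.leadingCoeff := by
  have hsmall : (fun t ↦ c₂ * (p.eval t * exp (γ₂ * t))) =o[atTop]
      fun t ↦ c₁ * (q.eval t * exp (γ₁ * t)) := by
    refine (IsLittleO.const_mul_left ?_ c₂).const_mul_right hc₁.ne'
    rcases hlex with hγ | ⟨rfl, hdeg⟩
    · exact isLittleO_eval_mul_exp_of_lt hq hγ
    · exact isLittleO_eval_mul_exp_of_degree_lt γ₁ hdeg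
  filter_upwards [(IsEquivalent.refl.add_isLittleO hsmall).eventually_sign_eq,
    q.eventually_sign_eval_eq_sign_leadingCoeff] with t hsum hlead
  rw [Pi.add_apply] at hsum
  rw [hsum, sign_mul, sign_mul, sign_pos hc₁, sign_pos (exp_pos _), hlead, one_mul, mul_one]

theorem stmt_16_general (γ₁ γ₂ : ℝ) (k₁ k₂ : ℕ)
    (hlex : γ₂ < γ₁ ∨ (γ₁ = γ₂ ∧ k₂ < k₁))
    (h₁ : ¬(γ₁ = 0 ∧ k₁ = 0))
    (μ₁ μ₂ : ℝ) (hμ₁ : 0 < μ₁)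
    (s : ℝ)
    (φ : ℝ → ℝ)
    (hφ : ∀ t : ℝ, φ t =
      μ₁ * ((1 / (k₁.factorial : ℝ)) * (∏ l ∈ Finset.range k₁, (t - l)) *
        Real.exp (γ₁ * (t - k₁)))
      + s * (μ₂ * ((1 / (k₂.factorial : ℝ)) * (∏ l ∈ Finset.range k₂, (t - l)) *
        Real.exp (γ₂ * (t - k₂))))) :
    ∃ N : ℝ, ∀ t : ℝ, N ≤ t →
      (0 ≤ γ₁ → 0 < deriv φ t) ∧ (γ₁ < 0 → deriv φ t < 0) := by
  set P₁ := descPochhammer ℝ k₁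
  set P₂ := descPochhammer ℝ k₂
  set c₁ := μ₁ / k₁.factorial * exp (-(γ₁ * k₁))
  set c₂ := s * μ₂ / k₂.factorial * exp (-(γ₂ * k₂))
  have hc₁ : 0 < c₁ := by positivity
  have hφ' : φ = fun t ↦ c₁ * (P₁.eval t * exp (γ₁ * t)) + c₂ * (P₂.eval t * exp (γ₂ * t)) := by
    have hshift (γ a t : ℝ) : exp (γ * (t - a)) = exp (-(γ * a)) * exp (γ * t) := by
      rw [← exp_add]; ring_nf
    ext t
    simp only [hφ, P₁, P₂, c₁, c₂, descPochhammer_eval_eq_prod_range, hshift]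
    ring
  have hderiv (t : ℝ) : deriv φ t = c₁ * ((twistedDerivative γ₁ P₁).eval t * exp (γ₁ * t)) +
      c₂ * ((twistedDerivative γ₂ P₂).eval t * exp (γ₂ * t)) := by
    rw [hφ']
    exact (((hasDerivAt_eval_mul_exp P₁ γ₁ t).const_mul c₁).add
      ((hasDerivAt_eval_mul_exp P₂ γ₂ t).const_mul c₂)).deriv
  have hsign := sign_leadingCoeff_twistedDerivative (monic_descPochhammer ℝ k₁)
    (by rwa [descPochhammer_natDegree])
  have hq : twistedDerivative γ₁ P₁ ≠ 0 := by
    intro h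
    rw [h, leadingCoeff_zero, _root_.sign_zero] at hsign
    split_ifs at hsign
  have hlex' : γ₂ < γ₁ ∨ γ₁ = γ₂ ∧
      (twistedDerivative γ₂ P₂).degree < (twistedDerivative γ₁ P₁).degree := by
    refine hlex.imp_right fun ⟨hγ, hk⟩ ↦ ⟨hγ, hγ ▸ degree_twistedDerivative_lt γ₁ ?_⟩
    simpa [P₁, P₂, descPochhammer_natDegree] using hk
  obtain ⟨N, hN⟩ := eventually_atTop.1 (eventually_sign_add_eval_mul_exp c₂ hc₁ hq hlex')
  refine ⟨N, fun t ht ↦ ⟨fun hγ ↦ ?_, fun hγ ↦ ?_⟩⟩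
  · rw [← sign_eq_one_iff, hderiv, hN t ht, hsign, if_pos hγ]
  · rw [← sign_eq_neg_one_iff, hderiv, hN t ht, hsign, if_neg (not_le.2 hγ)]

/-- Eventual strict sign of the derivative of
`φ = μ₁·φ_{γ₁,k₁} + s·μ₂·φ_{γ₂,k₂}` when `(γ₁,k₁) ≻ (γ₂,k₂)` lexicographically:
positive if `γ₁ ≥ 0`, negative if `γ₁ < 0`. -/
theorem stmt_16 (γ₁ γ₂ : ℝ) (k₁ k₂ : ℕ)
    (hlex : γ₂ < γ₁ ∨ (γ₁ = γ₂ ∧ k₂ < k₁))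
    (h₁ : ¬(γ₁ = 0 ∧ k₁ = 0)) (h₂ : ¬(γ₂ = 0 ∧ k₂ = 0))
    (μ₁ μ₂ : ℝ) (hμ₁ : 0 < μ₁) (hμ₂ : 0 < μ₂)
    (s : ℝ) (hs : s = -1 ∨ s = 1)
    (φ : ℝ → ℝ)
    (hφ : ∀ t : ℝ, φ t =
      μ₁ * ((1 / (k₁.factorial : ℝ)) * (∏ l ∈ Finset.range k₁, (t - l)) *
        Real.exp (γ₁ * (t - k₁)))
      + s * (μ₂ * ((1 / (k₂.factorial : ℝ)) * (∏ l ∈ Finset.range k₂, (t - l)) *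
        Real.exp (γ₂ * (t - k₂))))) :
    ∃ N : ℝ, ∀ t : ℝ, N ≤ t →
      (0 ≤ γ₁ → 0 < deriv φ t) ∧ (γ₁ < 0 → deriv φ t < 0) :=
  stmt_16_general γ₁ γ₂ k₁ k₂ hlex h₁ μ₁ μ₂ hμ₁ s φ hφ
end
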